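/- arXiv:2206.11419 — 2 statements merged into one kernel-verified Lean document; each statement's English description precedes it below -/
import Mathlib

section
/- Let f : Finset V → ℝ be a monotone submodular set function with f(∅) = 0 on a finite ground set V, and let k ≥ 1. If S* is the result of the standard greedy algorithm that iteratively adds the element with maximum marginal gain for k steps, then f(S*) ≥ (1 − 1/e) · max{f(S) : |S| = k}. -/
/-!
If `x` has the largest marginal gain at `A` and `|T| = k`, submodularity bounds the
gain `f T - f A` still to be made by `k` times the gain of `x`, since adding the elements
of `T` one at a time gains at most their marginal gains at `A`. So each greedy step
shrinks the gap `f T - f (S i)` by a factor `1 - 1/k`, and after `k` steps the gap is at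
most `(1 - 1/k)^k f T ≤ f T / e`.
-/

open Finset

section

variable {V : Type*} [DecidableEq V] {f : Finset V → ℝ}

theorem le_add_sum_marginal_gain
    (hsub : ∀ (A B : Finset V) (x : V), A ⊆ B → x ∉ B →
      f (insert x B) - f B ≤ f (insert x A) - f A)
    (A T : Finset V) :
    f (A ∪ T) ≤ f A + ∑ x ∈ T, (f (insert x A) - f A) := by
  induction T using Finset.induction_on with
  | empty => simp
  | @insert y T hyT ih =>
    rw [sum_insert hyT, union_insert]
    by_cases hy : y ∈ A ∪ T
    · have hyA : y ∈ A := by simpa [hyT] using hy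
      simpa [insert_eq_of_mem hy, insert_eq_of_mem hyA] using ih
    · linarith [hsub A (A ∪ T) y subset_union_left hy]

theorem sub_le_card_mul_greedy_gain
    (hmono : Monotone f)
    (hsub : ∀ (A B : Finset V) (x : V), A ⊆ B → x ∉ B →
      f (insert x B) - f B ≤ f (insert x A) - f A)
    {A : Finset V} {x : V} (hmax : ∀ y, f (insert y A) - f A ≤ f (insert x A) - f A)
    (T : Finset V) :
    f T - f A ≤ #T * (f (insert x A) - f A) := by
  have hsum : ∑ y ∈ T, (f (insert y A) - f A) ≤ #T * (f (insert x A) - f A) := by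
    simpa using sum_le_card_nsmul T _ _ fun y _ ↦ hmax y
  linarith [hmono (subset_union_right : T ⊆ A ∪ T), le_add_sum_marginal_gain hsub A T]

theorem sub_le_one_sub_inv_mul_sub {a b t k : ℝ} (hk : 0 < k) (h : t - a ≤ k * (b - a)) :
    t - b ≤ (1 - 1 / k) * (t - a) := by
  have : (t - a) / k ≤ b - a := by rwa [div_le_iff₀ hk, mul_comm]
  linarith [show (1 - 1 / k) * (t - a) = (t - a) - (t - a) / k by ring]

end

theorem stmt_6_general {V : Type*} [DecidableEq V]
    (f : Finset V → ℝ) (k : ℕ) (hk : 1 ≤ k)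
    (hmono : ∀ A B : Finset V, A ⊆ B → f A ≤ f B)
    (hsub : ∀ (A B : Finset V) (x : V), A ⊆ B → x ∉ B →
      f (B ∪ {x}) - f B ≤ f (A ∪ {x}) - f A)
    (hempty : f ∅ = 0)
    (S : ℕ → Finset V) (hS0 : S 0 = ∅)
    (hgreedy : ∀ i < k, ∃ x : V, x ∉ S i ∧ S (i + 1) = insert x (S i) ∧
      ∀ y : V, f (insert y (S i)) - f (S i) ≤ f (insert x (S i)) - f (S i))
    (Sstar : Finset V) (hSstar : Sstar = S k) :
    ∀ T : Finset V, T.card = k → f Sstar ≥ (1 - 1 / Real.exp 1) * f T := by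
  intro T hT
  have hmono' : Monotone f := fun A B ↦ hmono A B
  have hsub' : ∀ (A B : Finset V) (x : V), A ⊆ B → x ∉ B →
      f (insert x B) - f B ≤ f (insert x A) - f A := by
    simpa only [union_singleton] using hsub
  have hkpos : (0 : ℝ) < k := by exact_mod_cast hk
  have hc : 0 ≤ 1 - 1 / (k : ℝ) := by
    rw [sub_nonneg, div_le_one hkpos]; exact_mod_cast hk
  have hstep : ∀ i < k, f T - f (S (i + 1)) ≤ (1 - 1 / (k : ℝ)) * (f T - f (S i)) := by
    intro i hi
    obtain ⟨x, -, hSx, hmax⟩ := hgreedy i hi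
    apply sub_le_one_sub_inv_mul_sub hkpos
    simpa [hSx, hT] using sub_le_card_mul_greedy_gain hmono' hsub' hmax T
  have hgap := le_geom (u := fun i ↦ f T - f (S i)) hc k hstep
  have hpow : (1 - 1 / (k : ℝ)) ^ k ≤ 1 / Real.exp 1 := by
    simpa [Real.exp_neg] using Real.one_sub_div_pow_le_exp_neg (t := 1) (by exact_mod_cast hk)
  have hT0 : 0 ≤ f T := hempty ▸ hmono _ _ (empty_subset T)
  rw [hS0, hempty, sub_zero] at hgap
  rw [hSstar]
  linarith [mul_le_mul_of_nonneg_right hpow hT0]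

/-- Greedy guarantee for monotone submodular maximization (Nemhauser–Wolsey–Fisher). -/
theorem stmt_6 {V : Type*} [DecidableEq V] [Fintype V]
    (f : Finset V → ℝ) (k : ℕ) (hk : 1 ≤ k)
    (hmono : ∀ A B : Finset V, A ⊆ B → f A ≤ f B)
    (hsub : ∀ (A B : Finset V) (x : V), A ⊆ B → x ∉ B →
      f (B ∪ {x}) - f B ≤ f (A ∪ {x}) - f A)
    (hempty : f ∅ = 0)
    (S : ℕ → Finset V) (hS0 : S 0 = ∅)
    (hgreedy : ∀ i < k, ∃ x : V, x ∉ S i ∧ S (i + 1) = insert x (S i) ∧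
      ∀ y : V, f (insert y (S i)) - f (S i) ≤ f (insert x (S i)) - f (S i))
    (Sstar : Finset V) (hSstar : Sstar = S k) :
    ∀ T : Finset V, T.card = k → f Sstar ≥ (1 - 1 / Real.exp 1) * f T :=
  stmt_6_general f k hk hmono hsub hempty S hS0 hgreedy Sstar hSstar
end

section
/- Let μ, μ̲, μ̄ : Finset V → ℝ≥0 satisfy μ̲(S) ≤ μ(S) ≤ μ̄(S) for all S. Let S^U, S^L be (1−1/e)-approximate maximizers of μ̄ and μ̲ respectively over size-k sets, let S° maximize μ over size-k sets, and let S* = argmax over {S^L, S^U} of μ. Then μ(S*) ≥ β·(1−1/e)·μ(S°) where β = max{ μ(S^U)/μ̄(S^U), μ̲(S°)/μ(S°) }. -/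
/-!
Both candidates dominate a multiple of `μ(S°)`. For `S^U`, the upper bound `μ̄` dominates `μ`
at `S°`, so `c μ(S°) ≤ c μ̄(S°) ≤ μ̄(S^U)`, and rescaling by `μ(S^U)/μ̄(S^U)` gives
`μ(S^U)`. For `S^L`, the lower bound `μ̲` is dominated by `μ` at `S^L`, so
`c μ̲(S°) ≤ μ̲(S^L) ≤ μ(S^L)`. Since `S*` beats both, it beats the larger of the two bounds.
-/

section Sandwich

variable {α : Type*} {μ ν : α → ℝ} {c : ℝ} {s o : α}

theorem ratio_mul_le_of_approxMax_upper (hc : 0 ≤ c) (hμo : μ o ≤ ν o)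
    (hs : c * ν o ≤ ν s) (hμs : 0 ≤ μ s) (hνs : 0 < ν s) :
    μ s / ν s * (c * μ o) ≤ μ s :=
  calc μ s / ν s * (c * μ o)
      ≤ μ s / ν s * ν s := by gcongr; exact (mul_le_mul_of_nonneg_left hμo hc).trans hs
    _ = μ s := div_mul_cancel₀ _ hνs.ne'

theorem ratio_mul_le_of_approxMax_lower (hμs : ν s ≤ μ s) (hs : c * ν o ≤ ν s)
    (hμo : μ o ≠ 0) :
    ν o / μ o * (c * μ o) ≤ μ s :=
  calc ν o / μ o * (c * μ o) = c * ν o := by field_simp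
    _ ≤ μ s := hs.trans hμs

end Sandwich

theorem one_sub_inv_exp_one_nonneg : 0 ≤ 1 - 1 / Real.exp 1 :=
  sub_nonneg.2 <| div_le_one_of_le₀ (Real.one_le_exp zero_le_one) (Real.exp_pos 1).le

theorem stmt_15_general {V : Type*} [DecidableEq V]
    (μ μl μu : Finset V → ℝ) (k : ℕ)
    (hsand : ∀ S : Finset V, μl S ≤ μ S ∧ μ S ≤ μu S)
    (SU SL Sopt Sstar : Finset V)
    (hSoptcard : Sopt.card = k)
    (hSU : ∀ T : Finset V, T.card = k → μu SU ≥ (1 - 1 / Real.exp 1) * μu T)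
    (hSL : ∀ T : Finset V, T.card = k → μl SL ≥ (1 - 1 / Real.exp 1) * μl T)
    (hμSUpos : 0 < μ SU) (hμuSUpos : 0 < μu SU) (hμSoptpos : 0 < μ Sopt)
    (hSstar : Sstar ∈ ({SL, SU} : Finset (Finset V)) ∧
      μ Sstar = max (μ SL) (μ SU)) :
    μ Sstar ≥ max (μ SU / μu SU) (μl Sopt / μ Sopt) * (1 - 1 / Real.exp 1) * μ Sopt := by
  have hc := one_sub_inv_exp_one_nonneg
  have hU := ratio_mul_le_of_approxMax_upper hc (hsand Sopt).2 (hSU Sopt hSoptcard)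
    hμSUpos.le hμuSUpos
  have hL := ratio_mul_le_of_approxMax_lower (hsand SL).1 (hSL Sopt hSoptcard) hμSoptpos.ne'
  rw [ge_iff_le, mul_assoc, max_mul_of_nonneg _ _ (by positivity), hSstar.2]
  exact max_le (hU.trans (le_max_right _ _)) (hL.trans (le_max_left _ _))

/-- Sandwich approximation guarantee (Lu et al.). -/
theorem stmt_15 {V : Type*} [DecidableEq V] [Fintype V]
    (μ μl μu : Finset V → ℝ) (k : ℕ) (hk : 1 ≤ k)
    (hsand : ∀ S : Finset V, μl S ≤ μ S ∧ μ S ≤ μu S)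
    (hlnonneg : ∀ S : Finset V, 0 ≤ μl S)
    (SU SL Sopt Sstar : Finset V)
    (hSUcard : SU.card = k) (hSLcard : SL.card = k) (hSoptcard : Sopt.card = k)
    (hSU : ∀ T : Finset V, T.card = k → μu SU ≥ (1 - 1 / Real.exp 1) * μu T)
    (hSL : ∀ T : Finset V, T.card = k → μl SL ≥ (1 - 1 / Real.exp 1) * μl T)
    (hSopt : ∀ T : Finset V, T.card = k → μ T ≤ μ Sopt)
    (hμSUpos : 0 < μ SU) (hμuSUpos : 0 < μu SU) (hμSoptpos : 0 < μ Sopt)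
    (hSstar : Sstar ∈ ({SL, SU} : Finset (Finset V)) ∧
      μ Sstar = max (μ SL) (μ SU)) :
    μ Sstar ≥ max (μ SU / μu SU) (μl Sopt / μ Sopt) * (1 - 1 / Real.exp 1) * μ Sopt :=
  stmt_15_general μ μl μu k hsand SU SL Sopt Sstar hSoptcard hSU hSL hμSUpos hμuSUpos hμSoptpos
    hSstar
end
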